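/- arXiv:1905.06753 — 6 statements merged into one kernel-verified Lean document; each statement's English description precedes it below -/
import Mathlib

section
/- For every connected simple graph G on n vertices, the Wiener index W(G) (the sum of distances over all unordered pairs of distinct vertices) satisfies W(G) ≤ (n-1)n(n+1)/6. -/
/-!
Delete a vertex `v` whose removal leaves `G` connected (a leaf of a spanning tree). Distances
among the other vertices can only grow, so `W(G) ≤ W(G - v) + ∑ w, d(v, w)`. A shortest path from
`v` to `u` meets a vertex at every smaller distance from `v`, so `d(v, u)` is at most the number of
vertices strictly closer to `v` than `u`; summing over `u` gives `∑ w, d(v, w) ≤ n(n-1)/2`, and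
induction on `n` gives `W(G) ≤ ∑_{k<n} k(k+1)/2 = (n-1)n(n+1)/6`.
-/

open Finset

theorem Fintype.two_mul_card_filter_lt_le {α β : Type*} [Fintype α] [LinearOrder β] (f : α → β) :
    2 * #{p : α × α | f p.1 < f p.2} ≤ Fintype.card α * (Fintype.card α - 1) := by
  classical
  set A : Finset (α × α) := {p | f p.1 < f p.2}
  have hdisj : Disjoint A (A.map (Equiv.prodComm α α).toEmbedding) := by
    simp only [A, disjoint_left, mem_map, mem_filter, mem_univ, true_and]
    rintro p hp ⟨q, hq, rfl⟩
    exact lt_asymm hp hq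
  have hsub : A ∪ A.map (Equiv.prodComm α α).toEmbedding ⊆ univ.offDiag := by
    simp only [A, subset_iff, mem_union, mem_map, mem_filter, mem_univ, true_and, mem_offDiag]
    rintro p (hp | ⟨q, hq, rfl⟩)
    · exact fun h => hp.ne (congrArg f h)
    · exact fun h => hq.ne (congrArg f h.symm)
  calc 2 * #A = #(A ∪ A.map (Equiv.prodComm α α).toEmbedding) := by
        rw [card_union_of_disjoint hdisj, card_map, two_mul]
    _ ≤ #(univ : Finset α).offDiag := card_le_card hsub
    _ = Fintype.card α * (Fintype.card α - 1) := by
        rw [offDiag_card, card_univ, Nat.mul_sub_one]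

theorem Fintype.two_mul_sum_card_filter_lt_le {α β : Type*} [Fintype α] [LinearOrder β]
    (f : α → β) :
    2 * ∑ u, #{w | f w < f u} ≤ Fintype.card α * (Fintype.card α - 1) := by
  classical
  convert Fintype.two_mul_card_filter_lt_le f using 2
  rw [card_filter, Fintype.sum_prod_type, sum_comm]
  simp only [card_filter]

namespace SimpleGraph

variable {V : Type*} {G : SimpleGraph V}

theorem Walk.dist_getVert_of_length_eq_dist {u v : V} (p : G.Walk u v) (hp : p.length = G.dist u v)
    {k : ℕ} (hk : k ≤ p.length) : G.dist u (p.getVert k) = k := by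
  have := length_eq_dist_of_subwalk hp (p.isSubwalk_take k)
  rw [Walk.take_length] at this
  omega

theorem Reachable.dist_le_card_filter_dist_lt [Fintype V] {u v : V} (h : G.Reachable u v) :
    G.dist u v ≤ #{w | G.dist u w < G.dist u v} := by
  classical
  obtain ⟨p, hp⟩ := h.exists_walk_length_eq_dist
  have hdist : ∀ k < G.dist u v, G.dist u (p.getVert k) = k :=
    fun k hk => p.dist_getVert_of_length_eq_dist hp (by omega)
  calc G.dist u v = #(range (G.dist u v)) := (card_range _).symm
    _ ≤ #{w | G.dist u w < G.dist u v} := by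
      refine card_le_card_of_injOn p.getVert (fun k hk => ?_) (fun k hk l hl hkl => ?_)
      · simp only [coe_range, Set.mem_Iio] at hk
        simpa [hdist k hk] using hk
      · simp only [coe_range, Set.mem_Iio] at hk hl
        rw [← hdist k hk, ← hdist l hl, hkl]

theorem Connected.two_mul_sum_dist_le [Fintype V] (hG : G.Connected) (u : V) :
    2 * ∑ v, G.dist u v ≤ Fintype.card V * (Fintype.card V - 1) :=
  calc 2 * ∑ v, G.dist u v ≤ 2 * ∑ v, #{w | G.dist u w < G.dist u v} := by
        gcongr with v; exact (hG u v).dist_le_card_filter_dist_lt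
    _ ≤ _ := Fintype.two_mul_sum_card_filter_lt_le (G.dist u)

theorem Hom.dist_le {W : Type*} {H : SimpleGraph W} (f : G →g H) {u v : V} (h : G.Reachable u v) :
    H.dist (f u) (f v) ≤ G.dist u v := by
  obtain ⟨p, hp⟩ := h.exists_walk_length_eq_dist
  rw [← hp, ← p.length_map f]
  exact SimpleGraph.dist_le _

theorem sum_sum_dist_eq_sum_sum_compl_add [Fintype V] [DecidableEq V] (v : V) :
    ∑ a, ∑ b, G.dist a b =
      ∑ a : ({v}ᶜ : Set V), ∑ b : ({v}ᶜ : Set V), G.dist a b + 2 * ∑ b, G.dist v b := by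
  have hsplit (f : V → ℕ) : ∑ a, f a = f v + ∑ a : ({v}ᶜ : Set V), f a :=
    Fintype.sum_eq_add_sum_subtype_ne f v
  simp only [hsplit, dist_self, sum_add_distrib, dist_comm (v := v)]
  ring

theorem Connected.sum_sum_dist_le [Fintype V] (hG : G.Connected) :
    (∑ a, ∑ b, G.dist a b : ℚ) ≤
      (Fintype.card V - 1) * Fintype.card V * (Fintype.card V + 1) / 3 := by
  refine Fintype.induction_subsingleton_or_nontrivial
    (P := fun V _ => ∀ G : SimpleGraph V, G.Connected → (∑ a, ∑ b, G.dist a b : ℚ) ≤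
      (Fintype.card V - 1) * Fintype.card V * (Fintype.card V + 1) / 3) V ?_ ?_ G hG
  · intro V _ _ G hG
    have : Nonempty V := hG.nonempty
    have hcard : Fintype.card V = 1 := le_antisymm
      (Fintype.card_le_one_iff_subsingleton.mpr ‹_›) Fintype.card_pos
    have hdist (a b : V) : G.dist a b = 0 := by rw [Subsingleton.elim a b, dist_self]
    simp [hdist, hcard]
  intro V _ _ ih G hG
  classical
  obtain ⟨v, hv⟩ := hG.exists_connected_induce_compl_singleton_of_finite_nontrivial
  set W := ({v}ᶜ : Set V)
  have hn : 1 ≤ Fintype.card V := Fintype.card_pos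
  have hcard : Fintype.card W = Fintype.card V - 1 := by
    rw [Fintype.card_compl_set]
    simp
  have hind := ih W (by omega) _ hv
  have hmono : ∑ a : W, ∑ b : W, (G.dist a b : ℚ) ≤
      ∑ a : W, ∑ b : W, ((G.induce W).dist a b : ℚ) := by
    gcongr with a _ b _
    exact_mod_cast (Embedding.induce W).toHom.dist_le (hv a b)
  have hsum_v : 2 * ∑ b, (G.dist v b : ℚ) ≤ Fintype.card V * (Fintype.card V - 1) := by
    exact_mod_cast hG.two_mul_sum_dist_le v
  have hsplit : (∑ a, ∑ b, G.dist a b : ℚ) =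
      ∑ a : W, ∑ b : W, (G.dist a b : ℚ) + 2 * ∑ b, (G.dist v b : ℚ) := by
    exact_mod_cast sum_sum_dist_eq_sum_sum_compl_add v
  rw [hcard, Nat.cast_sub hn, Nat.cast_one] at hind
  rw [hsplit]
  linarith

end SimpleGraph

/-- The Wiener index of a connected graph on `n` vertices is at most
`(n-1)n(n+1)/6`. Stated over `ℚ`: the sum of distances over ordered pairs is
twice the Wiener index. -/
theorem wiener_le_of_connected {V : Type*} [Fintype V]
    (G : SimpleGraph V) (hG : G.Connected) (n : ℕ) (hn : n = Fintype.card V) :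
    ((∑ u : V, ∑ v : V, G.dist u v : ℕ) : ℚ) / 2 ≤
      ((n : ℚ) - 1) * n * (n + 1) / 6 := by
  subst hn
  have := hG.sum_sum_dist_le
  push_cast
  linarith
end

section
/- Let G be a κ-connected simple graph of order n and x an arbitrary vertex of G. Then σ(x) ≤ ⌊(n+κ-1)/κ⌋ · (n - 1 - (κ/2)·⌊(n-1)/κ⌋). -/
/-- `G` is `k`-connected: it is connected and remains connected after deleting
any set of fewer than `k` vertices. -/
def KConnected {V : Type*} [Fintype V] [DecidableEq V] (G : SimpleGraph V) (k : ℕ) : Prop :=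
  G.Connected ∧ ∀ s : Finset V, s.card < k → (G.induce ((↑s : Set V)ᶜ)).Connected

open Finset

/-- Discrete IVT along a walk. -/
lemma walk_ivt {W : Type*} {H : SimpleGraph W} (f : W → ℕ)
    (hf : ∀ a b : W, H.Adj a b → f b ≤ f a + 1) {a b : W} (p : H.Walk a b) (j : ℕ) :
    f a ≤ j → j ≤ f b → ∃ v ∈ p.support, f v = j := by
  induction p with
  | nil => exact fun ha hb => ⟨_, by simp, le_antisymm ha hb⟩
  | @cons a c b h p ih =>
    intro ha hb
    by_cases hc : f c ≤ j
    · obtain ⟨v, hv, hvj⟩ := ih hc hb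
      exact ⟨v, by simp [hv], hvj⟩
    · have := hf a c h
      exact ⟨a, by simp, by omega⟩

/-- In a `k`-connected graph, each intermediate BFS level from `x` has at least `k` vertices. -/
lemma level_card_ge {V : Type*} [Fintype V] [DecidableEq V] {G : SimpleGraph V} {k : ℕ}
    (hG : KConnected G k) (x u : V) (j : ℕ) (hj : 1 ≤ j) (hu : j < G.dist x u) :
    k ≤ (univ.filter (fun v => G.dist x v = j)).card := by
  by_contra hlt
  push_neg at hlt
  set S : Finset V := univ.filter (fun v => G.dist x v = j) with hS
  have hconn' := hG.2 S hlt
  have hx : x ∈ ((↑S : Set V)ᶜ) := by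
    simp only [Set.mem_compl_iff, coe_filter, Set.mem_setOf_eq, hS]
    simp only [mem_univ, true_and]
    simp [SimpleGraph.dist_self]; omega
  have hu' : u ∈ ((↑S : Set V)ᶜ) := by
    simp only [Set.mem_compl_iff, coe_filter, Set.mem_setOf_eq, hS]
    simp only [mem_univ, true_and]; omega
  obtain ⟨p⟩ := hconn'.preconnected ⟨x, hx⟩ ⟨u, hu'⟩
  have hf : ∀ a b : ((↑S : Set V)ᶜ : Set V), (G.induce _).Adj a b →
      G.dist x ↑b ≤ G.dist x ↑a + 1 := by
    intro a b hab
    have hadj : G.Adj ↑a ↑b := hab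
    calc G.dist x ↑b ≤ G.dist x ↑a + G.dist (↑a) ↑b := hG.1.dist_triangle
    _ = G.dist x ↑a + 1 := by rw [SimpleGraph.dist_eq_one_iff_adj.mpr hadj]
  obtain ⟨v, _, hvj⟩ := walk_ivt (f := fun v : ((↑S : Set V)ᶜ : Set V) => G.dist x ↑v) hf p j
    (by simp [SimpleGraph.dist_self]) (le_of_lt hu)
  have := v.2
  simp only [hS, Set.mem_compl_iff, coe_filter, Set.mem_setOf_eq, mem_univ, true_and,
    mem_coe, mem_filter] at this
  exact this hvj

lemma count_le_aux {V : Type*} [Fintype V] [DecidableEq V] {G : SimpleGraph V} {k : ℕ}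
    (hG : KConnected G k) (x u : V) (m : ℕ) (hu : m + 1 ≤ G.dist x u) :
    1 + k * m + (univ.filter (fun v => m + 1 ≤ G.dist x v)).card ≤ Fintype.card V := by
  have hsplit := Finset.card_filter_add_card_filter_not
    (s := (univ : Finset V)) (p := fun v => m + 1 ≤ G.dist x v)
  have hneg : (univ.filter (fun v => ¬ (m + 1 ≤ G.dist x v))) =
      (range (m + 1)).biUnion (fun j => univ.filter (fun v => G.dist x v = j)) := by
    ext v
    simp only [mem_filter, mem_univ, true_and, mem_biUnion, mem_range, not_le]
    exact ⟨fun h => ⟨_, h, rfl⟩, fun ⟨j, hj, he⟩ => he ▸ hj⟩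
  have hdisj : ∀ j ∈ range (m + 1), ∀ j' ∈ range (m + 1), j ≠ j' →
      Disjoint (univ.filter (fun v => G.dist x v = j))
        (univ.filter (fun v => G.dist x v = j')) := by
    intro j _ j' _ hne
    rw [Finset.disjoint_left]
    intro a ha ha'
    simp only [mem_filter] at ha ha'
    omega
  have hcard : (univ.filter (fun v => ¬ (m + 1 ≤ G.dist x v))).card =
      ∑ j ∈ range (m + 1), (univ.filter (fun v => G.dist x v = j)).card := by
    rw [hneg, Finset.card_biUnion hdisj]
  have hsum : 1 + k * m ≤ ∑ j ∈ range (m + 1), (univ.filter (fun v => G.dist x v = j)).card := by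
    rw [Finset.sum_range_succ']
    have h0 : 1 ≤ (univ.filter (fun v => G.dist x v = 0)).card := by
      rw [Nat.one_le_iff_ne_zero, ← Nat.pos_iff_ne_zero, Finset.card_pos]
      exact ⟨x, by simp [SimpleGraph.dist_self]⟩
    have h1 : k * m ≤ ∑ j ∈ range m, (univ.filter (fun v => G.dist x v = j + 1)).card := by
      calc k * m = ∑ _j ∈ range m, k := by simp [mul_comm]
      _ ≤ _ := Finset.sum_le_sum (fun j hj => level_card_ge hG x u (j + 1)
            (by omega) (by simp only [mem_range] at hj; omega))
    omega
  rw [hcard] at hsplit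
  have huniv : Fintype.card V = (univ : Finset V).card := rfl
  omega

/-- Favaron–Kouider–Mahéo: in a `κ`-connected graph of order `n`, the total
distance of any vertex `x` satisfies
`σ(x) ≤ ⌊(n+κ-1)/κ⌋ · (n - 1 - (κ/2)·⌊(n-1)/κ⌋)`. -/
theorem totalDistance_le_of_kconnected {V : Type*} [Fintype V] [DecidableEq V]
    (G : SimpleGraph V) (k : ℕ) (hk : 1 ≤ k) (hG : KConnected G k)
    (n : ℕ) (hn : n = Fintype.card V) (x : V) :
    ((∑ u : V, G.dist x u : ℕ) : ℚ) ≤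
      (((n + k - 1) / k : ℕ) : ℚ) *
        ((n : ℚ) - 1 - ((k : ℚ) / 2) * (((n - 1) / k : ℕ) : ℚ)) := by
  have hne : Nonempty V := ⟨x⟩
  have hn1 : 1 ≤ n := by rw [hn]; exact Fintype.card_pos
  set M := (n - 1) / k with hM
  have hdm := Nat.div_add_mod (n - 1) k
  have hmod := Nat.mod_lt (n - 1) (show 0 < k by omega)
  rw [← hM] at hdm
  have key : ∀ m, m ≤ M →
      (univ.filter (fun v => m + 1 ≤ G.dist x v)).card + 1 + k * m ≤ n := by
    intro m hm
    by_cases hN : (univ.filter (fun v => m + 1 ≤ G.dist x v)).Nonempty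
    · obtain ⟨u, hu⟩ := hN
      simp only [mem_filter, mem_univ, true_and] at hu
      have := count_le_aux hG x u m hu
      omega
    · rw [Finset.not_nonempty_iff_eq_empty] at hN
      rw [hN]
      have h1 : k * m ≤ k * M := Nat.mul_le_mul_left k hm
      simp only [Finset.card_empty]
      omega
  have distle : ∀ u, G.dist x u ≤ M + 1 := by
    intro u
    by_contra h
    push_neg at h
    have h1 := count_le_aux hG x u (M + 1) (by omega)
    have h2 : 1 ≤ (univ.filter (fun v => M + 1 + 1 ≤ G.dist x v)).card :=
      Finset.card_pos.mpr ⟨u, by simp only [mem_filter, mem_univ, true_and]; omega⟩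
    have h3 : k * (M + 1) = k * M + k := by ring
    omega
  have hsig : ∑ u : V, G.dist x u =
      ∑ m ∈ range (M + 1), (univ.filter (fun v => m + 1 ≤ G.dist x v)).card := by
    calc ∑ u : V, G.dist x u
        = ∑ u : V, ((range (M + 1)).filter (fun m => m + 1 ≤ G.dist x u)).card := by
          refine Finset.sum_congr rfl fun u _ => ?_
          have h1 : (range (M + 1)).filter (fun m => m + 1 ≤ G.dist x u) =
              range (G.dist x u) := by
            ext m
            simp only [mem_filter, mem_range]
            have := distle u
            omega
          rw [h1, Finset.card_range]
      _ = ∑ u : V, ∑ m ∈ range (M + 1), if m + 1 ≤ G.dist x u then 1 else 0 :=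
          Finset.sum_congr rfl fun u _ => Finset.card_filter _ _
      _ = ∑ m ∈ range (M + 1), ∑ u : V, if m + 1 ≤ G.dist x u then 1 else 0 :=
          Finset.sum_comm
      _ = _ := Finset.sum_congr rfl fun m _ => (Finset.card_filter _ _).symm
  have hMk : (n + k - 1) / k = M + 1 := by
    have h1 : n + k - 1 = (n - 1) + k := by omega
    rw [h1, Nat.add_div_right _ (by omega)]
  rw [hsig, hMk]
  push_cast
  have hg : ∑ m ∈ range (M + 1), (m : ℚ) = (M + 1) * M / 2 := by
    have h2 : (∑ i ∈ range (M + 1), i) * 2 = (M + 1) * M := by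
      simpa using Finset.sum_range_id_mul_two (M + 1)
    have h3 := congrArg (Nat.cast : ℕ → ℚ) h2
    push_cast at h3
    linarith
  calc ∑ m ∈ range (M + 1), (((univ.filter (fun v => m + 1 ≤ G.dist x v)).card : ℕ) : ℚ)
      ≤ ∑ m ∈ range (M + 1), ((n : ℚ) - 1 - k * m) := by
        refine Finset.sum_le_sum fun m hm => ?_
        have hm' : m ≤ M := by simpa [Nat.lt_succ_iff] using hm
        have h1 := key m hm'
        have h2 : (((univ.filter (fun v => m + 1 ≤ G.dist x v)).card : ℕ) : ℚ) + 1 +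
            (k : ℚ) * m ≤ n := by exact_mod_cast h1
        linarith
    _ = (M + 1) * ((n : ℚ) - 1) - (k : ℚ) * ((M + 1) * M / 2) := by
        rw [Finset.sum_sub_distrib, Finset.sum_const, Finset.card_range, ← Finset.mul_sum, hg]
        push_cast
        ring
    _ = ((M : ℚ) + 1) * ((n : ℚ) - 1 - (k : ℚ) / 2 * M) := by ring
end

section
/- Fix integers κ ≥ 1 and n ≥ 2, and write n - 1 = κq + r with 1 ≤ r ≤ κ. Among all finite sequences (n_0, n_1, …, n_d) of positive integers with n_0 = 1, n_i ≥ κ for all 1 ≤ i ≤ d-1, and Σ_{i=0}^d n_i = n, the quantity F = Σ_{i=0}^d i·n_i is maximized uniquely by the sequence (1, κ, κ, …, κ, r) in which the entry κ appears exactly q times. -/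
/-!
With prefix sums `S_j = n_0 + ⋯ + n_j`, summation by parts gives `F = d·n - ∑_{j<d} S_j`, and the
constraints force `S_j ≥ 1 + jκ`, so `2F ≤ 2d(n - 1) - κd(d - 1)`. The same bound on `S_{d-1}`
together with `n_d ≥ 1` gives `d ≤ q + 1`, and for `d = q + 1 - c` the right-hand side falls short
of the claimed maximum by `κc(c - 1) + 2rc`. Equality therefore forces `d = q + 1` and
`S_j = 1 + jκ` for every `j < d`, which pins down the sequence.
-/

open Finset

theorem sum_range_prefixSums_add_sum_range_nsmul {M : Type*} [AddCommMonoid M] (g : ℕ → M)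
    (m : ℕ) :
    ∑ j ∈ range m, ∑ i ∈ range (j + 1), g i + ∑ i ∈ range (m + 1), i • g i =
      m • ∑ i ∈ range (m + 1), g i := by
  induction m with
  | zero => simp
  | succ m ih =>
    rw [sum_range_succ _ m, sum_range_succ (fun i => i • g i), add_add_add_comm, ih,
      sum_range_succ g (m + 1), nsmul_add, succ_nsmul, succ_nsmul]
    abel

theorem one_add_mul_le_sum_range_succ {g : ℕ → ℕ} {k j : ℕ} (hg0 : g 0 = 1)
    (hk : ∀ i, 1 ≤ i → i ≤ j → k ≤ g i) : 1 + j * k ≤ ∑ i ∈ range (j + 1), g i := by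
  induction j with
  | zero => simp [hg0]
  | succ j ih =>
    have hS := ih fun i h1 h2 => hk i h1 (by omega)
    have hj := hk (j + 1) (by omega) le_rfl
    rw [sum_range_succ, add_one_mul]
    omega

theorem le_quotient_of_sum_range_eq {g : ℕ → ℕ} {k q r e : ℕ} (hg0 : g 0 = 1)
    (hk : ∀ i, 1 ≤ i → i ≤ e → k ≤ g i) (hlast : 0 < g (e + 1)) (hrk : r ≤ k)
    (hsum : ∑ i ∈ range (e + 2), g i = k * q + r + 1) : e ≤ q := by
  have hS := one_add_mul_le_sum_range_succ hg0 hk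
  rw [sum_range_succ] at hsum
  have : e * k < (q + 1) * k := by linarith
  exact Nat.lt_succ_iff.mp (Nat.lt_of_mul_lt_mul_right this)

theorem two_mul_sum_range_one_add_mul (k d : ℕ) :
    2 * ∑ j ∈ range d, (1 + j * k) = 2 * d + k * (d * (d - 1)) := by
  rw [sum_add_distrib, ← sum_mul, sum_const, card_range, smul_eq_mul, mul_one, mul_add,
    ← sum_range_id_mul_two]
  ring

theorem eq_of_sum_range_succ_eq_one_add_mul {g : ℕ → ℕ} {k e : ℕ}
    (hS : ∀ j ≤ e, ∑ i ∈ range (j + 1), g i = 1 + j * k) : ∀ i, 1 ≤ i → i ≤ e → g i = k := by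
  rintro (_ | m) h1 h2
  · omega
  have hm := hS m (by omega)
  have hm1 := hS (m + 1) h2
  rw [sum_range_succ, hm, add_one_mul] at hm1
  omega

/-- Writing `q = e + c`, the two sides differ by `k * c * (c - 1)`. -/
theorem two_mul_succ_mul_add_le {k q r e : ℕ} (h : e ≤ q) :
    2 * (e + 1) * (k * q + r) + 2 * r * (q - e) ≤
      k * q * (q + 1) + 2 * r * (q + 1) + k * ((e + 1) * e) := by
  obtain ⟨c, rfl⟩ := Nat.exists_eq_add_of_le h
  have hc : k * c ≤ k * (c * c) := Nat.mul_le_mul_left k (Nat.le_mul_self c)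
  rw [Nat.add_sub_cancel_left]
  nlinarith

theorem two_mul_sum_range_mul_le_of_prefix_bounds {g : ℕ → ℕ} {k q r e : ℕ} (hg0 : g 0 = 1)
    (hk : ∀ i, 1 ≤ i → i ≤ e → k ≤ g i) (hlast : 0 < g (e + 1)) (hr : 1 ≤ r) (hrk : r ≤ k)
    (hsum : ∑ i ∈ range (e + 2), g i = k * q + r + 1) :
    2 * ∑ i ∈ range (e + 2), i * g i ≤ k * q * (q + 1) + 2 * r * (q + 1) ∧
      (2 * ∑ i ∈ range (e + 2), i * g i = k * q * (q + 1) + 2 * r * (q + 1) →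
        e = q ∧ (∀ i, 1 ≤ i → i ≤ e → g i = k) ∧ g (e + 1) = r) := by
  have hS : ∀ j ∈ range (e + 1), 1 + j * k ≤ ∑ i ∈ range (j + 1), g i := fun j hj =>
    one_add_mul_le_sum_range_succ hg0 fun i h1 h2 => hk i h1 (by grind)
  have hAbel := sum_range_prefixSums_add_sum_range_nsmul g (e + 1)
  simp only [smul_eq_mul, hsum] at hAbel
  change _ + ∑ i ∈ range (e + 2), i * g i = _ at hAbel
  have hL := two_mul_sum_range_one_add_mul k (e + 1)
  rw [Nat.add_sub_cancel] at hL
  have hAL := sum_le_sum hS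
  have he := le_quotient_of_sum_range_eq hg0 hk hlast hrk hsum
  have hquad := two_mul_succ_mul_add_le (k := k) (r := r) he
  set A := ∑ j ∈ range (e + 1), ∑ i ∈ range (j + 1), g i
  set L := ∑ j ∈ range (e + 1), (1 + j * k)
  have hslack := Nat.zero_le (r * (q - e))
  refine ⟨by linarith, fun hF => ?_⟩
  have hqe : e = q := by
    have hrc : r * (q - e) = 0 := by linarith
    have := (mul_eq_zero.mp hrc).resolve_left (by omega)
    omega
  have hA := (sum_eq_sum_iff_of_le hS).mp (show L = A by linarith)
  have hSe := hA e (by simp)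
  rw [sum_range_succ] at hsum
  refine ⟨hqe, eq_of_sum_range_succ_eq_one_add_mul fun j hj => (hA j (by grind)).symm, ?_⟩
  subst hqe
  linarith

theorem max_F_distance_sequence_general (k n q r : ℕ)
    (hr1 : 1 ≤ r) (hrk : r ≤ k) (hn : n = k * q + r + 1)
    (d : ℕ) (f : Fin (d + 1) → ℕ)
    (hpos : ∀ i, 0 < f i) (h0 : f 0 = 1)
    (hint : ∀ i : Fin (d + 1), 1 ≤ i.val → i.val < d → k ≤ f i)
    (hsum : ∑ i, f i = n) :
    2 * (∑ i : Fin (d + 1), i.val * f i) ≤ k * q * (q + 1) + 2 * r * (q + 1) ∧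
      (2 * (∑ i : Fin (d + 1), i.val * f i) = k * q * (q + 1) + 2 * r * (q + 1) →
        d = q + 1 ∧
          ∀ i : Fin (d + 1),
            f i = if i.val = 0 then 1 else if i.val ≤ q then k else r) := by
  set g : ℕ → ℕ := fun i => if h : i < d + 1 then f ⟨i, h⟩ else 0
  have hfg : ∀ i : Fin (d + 1), f i = g i := fun i => by simp [g, i.is_le]
  have hg0 : g 0 = 1 := by simpa [hfg] using h0
  have hgsum : ∑ i ∈ range (d + 1), g i = k * q + r + 1 := by
    rw [← hn, ← hsum, ← Fin.sum_univ_eq_sum_range]; simp only [hfg]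
  have hF : ∑ i : Fin (d + 1), i.val * f i = ∑ i ∈ range (d + 1), i * g i := by
    rw [← Fin.sum_univ_eq_sum_range (fun i => i * g i)]; simp only [hfg]
  obtain ⟨e, rfl⟩ : ∃ e, d = e + 1 := Nat.exists_eq_succ_of_ne_zero (by
    rintro rfl; simp [hg0] at hgsum; omega)
  have hgk : ∀ i, 1 ≤ i → i ≤ e → k ≤ g i := fun i h1 h2 => by
    simpa [hfg] using hint ⟨i, by omega⟩ h1 (by simpa using h2)
  have hlast : 0 < g (e + 1) := by simpa [hfg] using hpos (Fin.last _)
  obtain ⟨hle, hmax⟩ := two_mul_sum_range_mul_le_of_prefix_bounds hg0 hgk hlast hr1 hrk hgsum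
  rw [hF]
  refine ⟨hle, fun h => ?_⟩
  obtain ⟨rfl, hmid, hend⟩ := hmax h
  refine ⟨rfl, fun i => ?_⟩
  rw [hfg]
  split_ifs with h1 h2
  · rw [h1, hg0]
  · exact hmid i (by omega) h2
  · rw [show (i : ℕ) = e + 1 by omega, hend]

/-- Among finite sequences `(n_0,…,n_d)` of positive integers with `n_0 = 1`,
interior entries at least `κ`, and total sum `n = κq + r + 1` (`1 ≤ r ≤ κ`),
the quantity `F = Σ i·n_i` is uniquely maximized by `(1, κ, …, κ, r)` with `q`
copies of `κ`, whose `F`-value is `κ·q(q+1)/2 + r(q+1)` (stated doubled to stay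
in `ℕ`). -/
theorem max_F_distance_sequence (k n q r : ℕ) (hk : 1 ≤ k)
    (hr1 : 1 ≤ r) (hrk : r ≤ k) (hn : n = k * q + r + 1) (hn2 : k + 2 ≤ n)
    (d : ℕ) (f : Fin (d + 1) → ℕ)
    (hpos : ∀ i, 0 < f i) (h0 : f 0 = 1)
    (hint : ∀ i : Fin (d + 1), 1 ≤ i.val → i.val < d → k ≤ f i)
    (hsum : ∑ i, f i = n) :
    2 * (∑ i : Fin (d + 1), i.val * f i) ≤ k * q * (q + 1) + 2 * r * (q + 1) ∧
      (2 * (∑ i : Fin (d + 1), i.val * f i) = k * q * (q + 1) + 2 * r * (q + 1) →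
        d = q + 1 ∧
          ∀ i : Fin (d + 1),
            f i = if i.val = 0 then 1 else if i.val ≤ q then k else r) :=
  max_F_distance_sequence_general k n q r hr1 hrk hn d f hpos h0 hint hsum
end

section
/- Fix integers κ ≥ 1 and n with n - 1 = κq + r, 1 ≤ r ≤ κ, r ≠ 1, and q ≥ 1. Among all finite sequences (n_0,…,n_d) of positive integers with n_0 = 1, n_i ≥ κ for 1 ≤ i ≤ d-1, Σ n_i = n, and which are not equal to the sequence (1, κ, …, κ, r) (κ appearing q times), the quantity Σ_i i·n_i is maximized by the sequence (1, κ, …, κ, κ+1, r-1) in which the entry κ appears exactly q-1 times. -/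
open Finset

private lemma sum_identity (b : ℕ → ℕ) (m : ℕ) :
    (∑ i ∈ range (m+1), i * b i) + ∑ j ∈ range m, (∑ i ∈ range (j+1), b i)
      = m * ∑ i ∈ range (m+1), b i := by
  induction m with
  | zero => simp
  | succ m ih =>
    rw [sum_range_succ (fun i => i * b i), sum_range_succ (fun j => ∑ i ∈ range (j+1), b i),
        sum_range_succ b (m+1)]
    nlinarith [ih]

set_option maxHeartbeats 1000000 in
/-- Second-largest value: among sequences `(n_0,…,n_d)` of positive integers
with `n_0 = 1`, interior entries at least `κ`, sum `n = κq + r + 1`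
(`2 ≤ r ≤ κ`, `q ≥ 1`), and different from the maximizer `(1, κ, …, κ, r)`,
the quantity `F = Σ i·n_i` is at most the `F`-value of
`(1, κ, …, κ, κ+1, r-1)` (with `q-1` copies of `κ`), namely
`κ(q-1)q/2 + q(κ+1) + (q+1)(r-1)` (stated doubled to stay in `ℕ`). -/
theorem secondMax_F_distance_sequence (k n q r : ℕ) (hk : 1 ≤ k)
    (hr1 : 1 ≤ r) (hrk : r ≤ k) (hrne : r ≠ 1) (hq : 1 ≤ q)
    (hn : n = k * q + r + 1)
    (d : ℕ) (f : Fin (d + 1) → ℕ)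
    (hpos : ∀ i, 0 < f i) (h0 : f 0 = 1)
    (hint : ∀ i : Fin (d + 1), 1 ≤ i.val → i.val < d → k ≤ f i)
    (hsum : ∑ i, f i = n)
    (hne : ¬ (d = q + 1 ∧
      ∀ i : Fin (d + 1),
        f i = if i.val = 0 then 1 else if i.val ≤ q then k else r)) :
    2 * (∑ i : Fin (d + 1), i.val * f i) ≤
      k * (q - 1) * q + 2 * q * (k + 1) + 2 * (q + 1) * (r - 1) := by
  set a : ℕ → ℕ := fun i => if h : i < d + 1 then f ⟨i, h⟩ else 0 with ha
  have haval : ∀ i (h : i < d + 1), a i = f ⟨i, h⟩ := fun i h => dif_pos h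
  have hafin : ∀ i : Fin (d + 1), a i.val = f i := by
    intro i
    rw [haval i.val i.isLt]
  have hsum' : ∑ i ∈ range (d + 1), a i = n := by
    rw [Finset.sum_range, ← hsum]
    exact Finset.sum_congr rfl fun i _ => hafin i
  have hFeq : (∑ i : Fin (d + 1), i.val * f i) = ∑ i ∈ range (d + 1), i * a i := by
    rw [Finset.sum_range]
    exact Finset.sum_congr rfl fun i _ => by rw [hafin i]
  set S : ℕ → ℕ := fun j => ∑ i ∈ range j, a i with hSdef
  have ha0 : a 0 = 1 := by
    rw [haval 0 (Nat.succ_pos d)]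
    simpa using h0
  -- lower bound for prefix sums
  have hS : ∀ j < d, 1 + j * k ≤ S (j + 1) := by
    intro j hj
    have h1 : S (j + 1) = (∑ i ∈ range j, a (i + 1)) + a 0 := Finset.sum_range_succ' a j
    have h2 : ∀ i ∈ range j, k ≤ a (i + 1) := by
      intro i hi
      have hi' : i < j := mem_range.mp hi
      have hlt : i + 1 < d + 1 := by omega
      rw [haval (i + 1) hlt]
      exact hint ⟨i + 1, hlt⟩ (by simp) (by simpa using by omega)
    have h3 : j * k ≤ ∑ i ∈ range j, a (i + 1) := by
      calc j * k = ∑ _i ∈ range j, k := by simp [mul_comm]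
      _ ≤ ∑ i ∈ range j, a (i + 1) := Finset.sum_le_sum h2
    omega
  set P : ℕ := ∑ j ∈ range d, S (j + 1) with hPdef
  have hkey : (∑ i ∈ range (d + 1), i * a i) + P = d * n := by
    rw [← hsum']; exact sum_identity a d
  have hPlow : ∑ j ∈ range d, (1 + j * k) ≤ P :=
    Finset.sum_le_sum fun j hj => hS j (mem_range.mp hj)
  have hgauss : 2 * ∑ j ∈ range d, (1 + j * k) = 2 * d + d * (d - 1) * k := by
    rw [Finset.sum_add_distrib]
    simp only [Finset.sum_const, card_range, smul_eq_mul, mul_one]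
    rw [← Finset.sum_mul]
    have := Finset.sum_range_id_mul_two d
    nlinarith [this]
  rw [hFeq]
  -- trivial case d = 0
  rcases Nat.eq_zero_or_pos d with hd0 | hdpos
  · subst hd0
    simp
  obtain ⟨e, rfl⟩ : ∃ e, d = e + 1 := ⟨d - 1, by omega⟩
  have hgauss' : 2 * ∑ j ∈ range (e + 1), (1 + j * k) = 2 * (e + 1) + (e + 1) * e * k := by
    simpa using hgauss
  -- bound d ≤ q + 1
  have hSd : 1 + e * k ≤ S (e + 1) := hS e (by omega)
  have hSdn : S (e + 1) + a (e + 1) = n := by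
    rw [← hsum']; exact (Finset.sum_range_succ a (e + 1)).symm
  have halast : 1 ≤ a (e + 1) := by
    rw [haval (e + 1) (by omega)]
    exact hpos _
  have heq : e ≤ q := by
    by_contra hcon
    push_neg at hcon
    have : (q + 1) * k ≤ e * k := Nat.mul_le_mul_right k hcon
    nlinarith
  rcases Nat.lt_or_ge e q with helt | hege
  -- case d ≤ q : strict gap from short length
  · have hfinal : 2 * ((e + 1) * n) ≤
        k * (q - 1) * q + 2 * q * (k + 1) + 2 * (q + 1) * (r - 1)
          + (2 * (e + 1) + (e + 1) * e * k) := by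
      obtain ⟨c, rfl⟩ : ∃ c, q = e + 1 + c := ⟨q - e - 1, by omega⟩
      obtain ⟨r1, rfl⟩ : ∃ r1, r = r1 + 2 := ⟨r - 2, by omega⟩
      subst hn
      have h1 : e + 1 + c - 1 = e + c := by omega
      have h2 : r1 + 2 - 1 = r1 + 1 := by omega
      rw [h1, h2]
      have hx : k * (e + c) * (e + 1 + c) + 2 * (e + 1 + c) * (k + 1)
          + 2 * (e + 1 + c + 1) * (r1 + 1) + (2 * (e + 1) + (e + 1) * e * k)
          = 2 * ((e + 1) * (k * (e + 1 + c) + (r1 + 2) + 1))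
            + (k * c * (c + 1) + 2 * r1 * (c + 1) + 4 * c + 2) := by ring
      rw [hx]
      exact Nat.le_add_right _ _
    linarith [hkey, hPlow, hgauss']
  -- case d = q + 1
  · have heq' : e = q := le_antisymm heq hege
    subst heq'
    by_cases hall : ∀ j < e + 1, S (j + 1) = 1 + j * k
    · -- contradiction: f is the maximizer
      exfalso
      apply hne
      refine ⟨rfl, fun i => ?_⟩
      rcases Nat.eq_zero_or_pos i.val with hi0 | hipos
      · have : i = 0 := Fin.ext hi0
        simp [this, hi0, h0]
      · rcases Nat.lt_or_ge i.val (e + 1) with hilt | hige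
        · -- interior: f i = k
          obtain ⟨m, hm⟩ : ∃ m, i.val = m + 1 := ⟨i.val - 1, by omega⟩
          have e1 : S (m + 1 + 1) = 1 + (m + 1) * k := hall (m + 1) (by omega)
          have e2 : S (m + 1) = 1 + m * k := hall m (by omega)
          have e3 : S (m + 1 + 1) = S (m + 1) + a (m + 1) := Finset.sum_range_succ a (m + 1)
          have e4 : a (m + 1) = k := by linarith
          have : f i = k := by rw [← hafin i, hm]; exact e4
          rw [this]
          rw [if_neg (by omega), if_pos (by omega)]
        · -- last: f i = r
          have hival : i.val = e + 1 := by omega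
          have e2 : S (e + 1) = 1 + e * k := hall e (by omega)
          have e4 : a (e + 1) = r := by linarith [hSdn, e2]
          have : f i = r := by rw [← hafin i, hival]; exact e4
          rw [this]
          rw [if_neg (by omega), if_neg (by omega)]
    · -- some prefix sum is strictly larger
      push_neg at hall
      obtain ⟨j, hj, hjne⟩ := hall
      have hstrict : ∑ j ∈ range (e + 1), (1 + j * k) < P := by
        apply Finset.sum_lt_sum (fun j hj => hS j (mem_range.mp hj))
        exact ⟨j, mem_range.mpr hj, lt_of_le_of_ne (hS j hj) (Ne.symm hjne)⟩
      have hfinal : 2 * ((e + 1) * n) ≤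
          k * (e - 1) * e + 2 * e * (k + 1) + 2 * (e + 1) * (r - 1)
            + (2 * (e + 1) + (e + 1) * e * k + 2) := by
        obtain ⟨q1, rfl⟩ : ∃ q1, e = q1 + 1 := ⟨e - 1, by omega⟩
        obtain ⟨r1, rfl⟩ : ∃ r1, r = r1 + 2 := ⟨r - 2, by omega⟩
        subst hn
        have h1 : q1 + 1 - 1 = q1 := by omega
        have h2 : r1 + 2 - 1 = r1 + 1 := by omega
        rw [h1, h2]
        exact le_of_eq (by ring)
      linarith [hkey, hstrict, hgauss']
end

section
/- Among all trees on n ≥ 2 vertices, the star K_{1,n-1} has the minimum Wiener index, namely (n-1)². -/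
/-- The star `K_{1,n-1}` on `Fin n`: the vertex with value `0` is adjacent to
all others. -/
def starGraph (n : ℕ) : SimpleGraph (Fin n) where
  Adj u v := u ≠ v ∧ (u.val = 0 ∨ v.val = 0)
  symm := ⟨fun u v h => ⟨h.1.symm, h.2.symm⟩⟩
  loopless := ⟨fun u h => h.1 rfl⟩

/-!
In a connected graph distinct vertices are at distance `1` when adjacent and at least `2`
otherwise, so `∑ dist ≥ ∑ min dist 2 = 2 n (n - 1) - 2 |E|`, which is `2 (n - 1)²` for a tree.
The star has a vertex adjacent to all others, so its distances are at most `2` and the bound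
is attained.
-/

open Finset

lemma sum_sum_ite_eq_zero_const {V : Type*} [Fintype V] [DecidableEq V] (c : ℕ) :
    ∑ u : V, ∑ v : V, (if u = v then 0 else c) = c * (Fintype.card V * (Fintype.card V - 1)) := by
  simp [sum_ite, filter_ne, mul_comm, mul_left_comm]

lemma starGraph_eq_starGraph_zero {n : ℕ} (hn : 0 < n) :
    starGraph n = SimpleGraph.starGraph (⟨0, hn⟩ : Fin n) := by
  ext u v
  simp [starGraph, Fin.ext_iff]

namespace SimpleGraph

variable {V : Type*} {G : SimpleGraph V} {u v : V}

lemma IsUniversal.dist_le_one {r : V} (h : G.IsUniversal r) (v : V) : G.dist r v ≤ 1 := by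
  by_cases hrv : r = v
  · simp [hrv]
  · exact (dist_eq_one_iff_adj.mpr (h hrv)).le

lemma IsUniversal.dist_le_two {r : V} (h : G.IsUniversal r) (u v : V) : G.dist u v ≤ 2 :=
  calc G.dist u v ≤ G.dist u r + G.dist r v := (Connected.of_isUniversal h).dist_triangle
    _ ≤ 1 + 1 := by
      rw [dist_comm]
      exact add_le_add (h.dist_le_one u) (h.dist_le_one v)

lemma Reachable.min_dist_two_eq [DecidableEq V] [DecidableRel G.Adj] (h : G.Reachable u v) :
    min (G.dist u v) 2 = if u = v then 0 else if G.Adj u v then 1 else 2 := by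
  split_ifs with huv hadj
  · simp [huv]
  · simp [dist_eq_one_iff_adj.mpr hadj]
  · exact min_eq_right (h.one_lt_dist_of_ne_of_not_adj huv hadj)

variable [Fintype V] [DecidableRel G.Adj]

lemma sum_sum_ite_adj : ∑ u, ∑ v, (if G.Adj u v then 1 else 0 : ℕ) = 2 * #G.edgeFinset := by
  rw [← sum_degrees_eq_twice_card_edges]
  refine sum_congr rfl fun u _ => ?_
  rw [sum_boole, ← card_neighborFinset_eq_degree, neighborFinset_eq_filter]
  rfl

variable [DecidableEq V]

lemma Connected.sum_sum_min_dist_two_add (hG : G.Connected) :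
    ∑ u, ∑ v, min (G.dist u v) 2 + 2 * #G.edgeFinset
      = 2 * (Fintype.card V * (Fintype.card V - 1)) := by
  have hpair (u v : V) :
      min (G.dist u v) 2 + (if G.Adj u v then 1 else 0) = if u = v then 0 else 2 := by
    rw [(hG.preconnected u v).min_dist_two_eq]
    by_cases huv : u = v
    · simp [huv]
    · by_cases hadj : G.Adj u v <;> simp [huv, hadj]
  rw [← sum_sum_ite_eq_zero_const, ← sum_sum_ite_adj, ← sum_add_distrib]
  simp_rw [← sum_add_distrib, hpair]

lemma IsTree.sum_sum_min_dist_two (hG : G.IsTree) :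
    ∑ u, ∑ v, min (G.dist u v) 2 = 2 * (Fintype.card V - 1) ^ 2 := by
  have hsum := hG.connected.sum_sum_min_dist_two_add
  rw [← hG.card_edgeFinset, Nat.add_sub_cancel] at hsum ⊢
  linarith

end SimpleGraph

/-- Sums over ordered pairs count twice the Wiener index. -/
theorem star_min_wiener (n : ℕ) (hn : 2 ≤ n) :
    (starGraph n).IsTree ∧
      (∑ u : Fin n, ∑ v : Fin n, (starGraph n).dist u v) = 2 * (n - 1) ^ 2 ∧
      ∀ T : SimpleGraph (Fin n), T.IsTree →
        2 * (n - 1) ^ 2 ≤ ∑ u : Fin n, ∑ v : Fin n, T.dist u v := by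
  classical
  have hstar := starGraph_eq_starGraph_zero (n := n) (by omega)
  have htree : (starGraph n).IsTree := hstar ▸ SimpleGraph.isTree_starGraph _
  refine ⟨htree, ?_, fun T hT => ?_⟩
  · calc ∑ u, ∑ v, (starGraph n).dist u v = ∑ u, ∑ v, min ((starGraph n).dist u v) 2 := by
          rw [hstar]
          simp_rw [min_eq_left (SimpleGraph.isUniversal_starGraph_self.dist_le_two _ _)]
      _ = 2 * (n - 1) ^ 2 := by simpa using htree.sum_sum_min_dist_two
  · calc 2 * (n - 1) ^ 2 = ∑ u, ∑ v, min (T.dist u v) 2 := by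
          simpa using hT.sum_sum_min_dist_two.symm
      _ ≤ ∑ u, ∑ v, T.dist u v :=
          sum_le_sum fun u _ => sum_le_sum fun v _ => min_le_left _ _
end

section
/- Let κ ∈ {3,4,5} and suppose every vertex v of a connected simple graph G of order n satisfies: n_0(v)=1, n_i(v) ≥ κ for 1 ≤ i ≤ e(v)−1. Then for every vertex v, σ(v) ≤ (1/(2κ))n² + ((κ−2)/(2κ))n + (κ−3)/(2κ). -/
open Finset

/-!
Fix `v`, let `e` be its eccentricity and `S = ∑ u, (e - d(v,u))`, so that `σ(v) + S = e n`.
Counting `S` layer by layer, the centre contributes `e` and each layer `1 ≤ i < e` at least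
`κ (e - i)`, whence `2 S ≥ 2 e + κ e (e - 1)`. Eliminating `S`, the gap
`n² + (κ - 2) n + (κ - 3) - 2 κ σ(v)` is at least `(x + 1) (x + κ - 3)` with `x = n - κ e`,
and this product of integers is nonnegative exactly when `κ ∈ {3, 4, 5}`.
-/

theorem Int.add_one_mul_add_sub_three_nonneg {k : ℕ} (hk : k = 3 ∨ k = 4 ∨ k = 5) (x : ℤ) :
    0 ≤ (x + 1) * (x + k - 3) := by
  rcases le_or_gt x (-2) with hx | hx
  · apply mul_nonneg_of_nonpos_of_nonpos <;> omega
  · rcases eq_or_lt_of_le (show -1 ≤ x by omega) with rfl | hx'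
    · simp
    · apply mul_nonneg <;> omega

theorem Finset.sum_range_sub_add_one_mul_two (e : ℕ) :
    (∑ i ∈ range e, ((e : ℤ) - (i + 1))) * 2 = e * (e - 1) := by
  induction e with
  | zero => simp
  | succ m ih =>
    rw [sum_range_succ']
    push_cast
    simp only [add_sub_add_right_eq_sub]
    rw [add_mul, ih]; ring

section Layers

variable {α : Type*} [Fintype α] (d : α → ℕ)

theorem Finset.sum_comp_eq_sum_range_card_smul {M : Type*} [AddCommMonoid M] (g : ℕ → M)
    {e : ℕ} (hd : ∀ a, d a ≤ e) :
    ∑ a, g (d a) = ∑ i ∈ range (e + 1), #{a | d a = i} • g i := by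
  rw [← sum_fiberwise_of_maps_to' fun a _ ↦ mem_range.2 (Nat.lt_succ_of_le (hd a))]
  simp only [sum_const]

theorem two_mul_add_le_two_mul_sum_sub {k e : ℕ} (hd : ∀ a, d a ≤ e)
    (h0 : 1 ≤ #{a | d a = 0}) (hlayer : ∀ i, 1 ≤ i → i < e → k ≤ #{a | d a = i}) :
    2 * e + k * e * (e - 1) ≤ 2 * ∑ a, ((e : ℤ) - d a) := by
  rw [sum_comp_eq_sum_range_card_smul d (fun i ↦ (e : ℤ) - i) hd, sum_range_succ']
  have hlayers : ∑ i ∈ range e, (k : ℤ) * (e - (i + 1)) ≤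
      ∑ i ∈ range e, #{a | d a = i + 1} • ((e : ℤ) - ↑(i + 1)) := by
    refine sum_le_sum fun i hi ↦ ?_
    rw [nsmul_eq_mul]
    rcases Nat.lt_or_eq_of_le (mem_range.1 hi) with hi | hi
    · exact mul_le_mul_of_nonneg_right (by exact_mod_cast hlayer _ le_add_self hi) (by omega)
    · simp [← hi]
  have hcenter : (e : ℤ) ≤ #{a | d a = 0} • ((e : ℤ) - ↑(0 : ℕ)) := by
    rw [nsmul_eq_mul, Nat.cast_zero, sub_zero]
    exact le_mul_of_one_le_left (Nat.cast_nonneg e) (by exact_mod_cast h0)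
  have hgauss := sum_range_sub_add_one_mul_two e
  rw [← mul_sum] at hlayers
  linear_combination 2 * hlayers + 2 * hcenter - (k : ℤ) * hgauss

end Layers

theorem two_mul_mul_le_of_add_eq {k : ℕ} (hk : k = 3 ∨ k = 4 ∨ k = 5) {σ S e n : ℤ}
    (hsum : σ + S = e * n) (hS : 2 * e + k * e * (e - 1) ≤ 2 * S) :
    2 * k * σ ≤ n ^ 2 + (k - 2) * n + (k - 3) := by
  nlinarith [Int.add_one_mul_add_sub_three_nonneg hk (n - k * e),
    mul_le_mul_of_nonneg_left hS (Int.natCast_nonneg k)]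

theorem totalDistance_le_of_layer_bound_general {V : Type*} [Fintype V]
    (G : SimpleGraph V) (k : ℕ)
    (hk : k = 3 ∨ k = 4 ∨ k = 5) (n : ℕ) (hn : n = Fintype.card V)
    (h0 : ∀ v : V, (Finset.univ.filter (fun u => G.dist v u = 0)).card = 1)
    (hlayer : ∀ v : V, ∀ i : ℕ, 1 ≤ i →
      i + 1 ≤ Finset.univ.sup (fun u => G.dist v u) →
      k ≤ (Finset.univ.filter (fun u => G.dist v u = i)).card) :
    ∀ v : V, ((∑ u : V, G.dist v u : ℕ) : ℚ) ≤
      (n : ℚ) ^ 2 / (2 * k) + ((k : ℚ) - 2) * n / (2 * k) + ((k : ℚ) - 3) / (2 * k) := by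
  intro v
  set e := univ.sup fun u ↦ G.dist v u
  have hd : ∀ u, G.dist v u ≤ e := fun u ↦ le_sup (f := fun u ↦ G.dist v u) (mem_univ u)
  have hsum : (∑ u, G.dist v u : ℤ) + ∑ u, ((e : ℤ) - G.dist v u) = e * n := by
    rw [← sum_add_distrib]; simp [hn, mul_comm]
  have key := two_mul_mul_le_of_add_eq hk hsum
    (two_mul_add_le_two_mul_sum_sub (G.dist v) hd (h0 v).ge (hlayer v))
  have hk0 : (0 : ℚ) < 2 * k := by rcases hk with rfl | rfl | rfl <;> norm_num
  rw [← add_div, ← add_div, le_div_iff₀ hk0]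
  have := (Int.cast_le (R := ℚ)).2 key
  push_cast at this ⊢
  linarith

/-- If every vertex `v` of a connected graph `G` of order `n` has all
intermediate distance layers of size at least `κ` (with `κ ∈ {3,4,5}`), then
`σ(v) ≤ n²/(2κ) + (κ-2)n/(2κ) + (κ-3)/(2κ)` for every vertex `v`. -/
theorem totalDistance_le_of_layer_bound {V : Type*} [Fintype V] [DecidableEq V]
    (G : SimpleGraph V) (hG : G.Connected) (k : ℕ)
    (hk : k = 3 ∨ k = 4 ∨ k = 5) (n : ℕ) (hn : n = Fintype.card V)
    (h0 : ∀ v : V, (Finset.univ.filter (fun u => G.dist v u = 0)).card = 1)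
    (hlayer : ∀ v : V, ∀ i : ℕ, 1 ≤ i →
      i + 1 ≤ Finset.univ.sup (fun u => G.dist v u) →
      k ≤ (Finset.univ.filter (fun u => G.dist v u = i)).card) :
    ∀ v : V, ((∑ u : V, G.dist v u : ℕ) : ℚ) ≤
      (n : ℚ) ^ 2 / (2 * k) + ((k : ℚ) - 2) * n / (2 * k) + ((k : ℚ) - 3) / (2 * k) :=
  totalDistance_le_of_layer_bound_general G k hk n hn h0 hlayer
end
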